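/- arXiv:1607.03236 — 2 statements merged into one kernel-verified Lean document; each statement's English description precedes it below -/
import Mathlib

section
/- Let ρ be a density matrix on ℂ^d and let Λ be a measurement operator (a Hermitian matrix with 0 ≤ Λ ≤ I) such that tr(Λρ) > 0. Then the fidelity between ρ and the post-measurement state satisfies F( ρ , √Λ ρ √Λ / tr(Λρ) ) ≥ √( tr(Λρ) ). -/
/-! With `c = tr(Λρ)` and `σ = c⁻¹ √Λ ρ √Λ`, the matrix `√ρ σ √ρ` is the square of the positive
semidefinite matrix `c^{-1/2} √ρ √Λ √ρ`, so `F(ρ, σ) = c^{-1/2} tr(√Λ ρ)`. Since `0 ≤ Λ ≤ 1` forces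
`Λ ≤ √Λ`, we get `tr(√Λ ρ) ≥ tr(Λ ρ) = c`, hence `F(ρ, σ) ≥ √c`. -/

open Matrix
open scoped ComplexOrder

namespace Matrix.PosSemidef

/-- The positive semidefinite square root, as defined in the older Mathlib (removed since). -/
noncomputable def sqrt {n : Type*} [Fintype n] [DecidableEq n] {𝕜 : Type*} [RCLike 𝕜]
    {A : Matrix n n 𝕜} (hA : A.PosSemidef) : Matrix n n 𝕜 :=
  hA.1.eigenvectorUnitary.1 * diagonal ((↑) ∘ (√·) ∘ hA.1.eigenvalues) *
    (star hA.1.eigenvectorUnitary : Matrix n n 𝕜)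

lemma posSemidef_sqrt {n : Type*} [Fintype n] [DecidableEq n] {𝕜 : Type*} [RCLike 𝕜]
    {A : Matrix n n 𝕜} (hA : A.PosSemidef) : PosSemidef hA.sqrt := by
  apply PosSemidef.mul_mul_conjTranspose_same
  refine posSemidef_diagonal_iff.mpr fun i ↦ ?_
  rw [Function.comp_apply, RCLike.nonneg_iff]
  constructor
  · simp only [Function.comp_apply, RCLike.ofReal_re]
    exact Real.sqrt_nonneg _
  · simp only [Function.comp_apply, RCLike.ofReal_im]

end Matrix.PosSemidef

/-- The fidelity `F(ρ,σ) = tr √(√ρ σ √ρ)` between positive semidefinite matrices. -/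
noncomputable def fidelity {d : ℕ} {ρ σ : Matrix (Fin d) (Fin d) ℂ}
    (hρ : ρ.PosSemidef) (hσ : σ.PosSemidef) : ℝ :=
  ((show (hρ.sqrt * σ * hρ.sqrt).PosSemidef by
      have h := hσ.mul_mul_conjTranspose_same hρ.sqrt
      rwa [hρ.posSemidef_sqrt.1.eq] at h).sqrt.trace).re

section CFC

variable {A : Type*} [PartialOrder A] [Ring A] [StarRing A] [TopologicalSpace A]
  [StarOrderedRing A] [Algebra ℝ A] [ContinuousFunctionalCalculus ℝ A IsSelfAdjoint]
  [NonnegSpectrumClass ℝ A] [IsSemitopologicalRing A] [T2Space A]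

lemma CFC.le_sqrt_of_le_one {a : A} (ha₀ : 0 ≤ a) (ha₁ : a ≤ 1) : a ≤ CFC.sqrt a := by
  rw [CFC.le_one_iff (R := ℝ) a] at ha₁
  nth_rw 1 [← cfc_id ℝ a]
  rw [CFC.sqrt_eq_cfc, cfc_nnreal_eq_real _ a, cfc_le_iff ..]
  intro x hx
  have hx₀ : 0 ≤ x := spectrum_nonneg_of_nonneg ha₀ hx
  simpa [Real.toNNReal_of_nonneg hx₀, hx₀] using ha₁ x hx

lemma CFC.sqrt_smul [PosSMulMono ℝ A] {t : ℝ} (ht : 0 ≤ t) {a : A} (ha : 0 ≤ a) :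
    CFC.sqrt (t • a) = √t • CFC.sqrt a := by
  refine CFC.sqrt_unique ?_ (smul_nonneg (Real.sqrt_nonneg t) (CFC.sqrt_nonneg a))
  rw [smul_mul_smul, Real.mul_self_sqrt ht, CFC.sqrt_mul_sqrt_self a]

lemma CFC.sqrt_sqrt_mul_conjugate_mul_sqrt {a b : A} (ha : 0 ≤ a) (hb : 0 ≤ b) :
    CFC.sqrt (CFC.sqrt a * (b * a * b) * CFC.sqrt a) = CFC.sqrt a * b * CFC.sqrt a := by
  refine CFC.sqrt_unique ?_ ((IsSelfAdjoint.of_nonneg (CFC.sqrt_nonneg a)).conjugate_nonneg hb)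
  have h := CFC.sqrt_mul_sqrt_self a
  calc CFC.sqrt a * b * CFC.sqrt a * (CFC.sqrt a * b * CFC.sqrt a)
      = CFC.sqrt a * (b * (CFC.sqrt a * CFC.sqrt a) * b) * CFC.sqrt a := by noncomm_ring
    _ = _ := by rw [h]

end CFC

open scoped MatrixOrder

namespace Matrix.PosSemidef

variable {n 𝕜 : Type*} [Fintype n] [DecidableEq n] [RCLike 𝕜] {A B : Matrix n n 𝕜}

lemma sqrt_eq_cfcSqrt (hA : A.PosSemidef) : hA.sqrt = CFC.sqrt A := by
  rw [CFC.sqrt_eq_cfc, cfc_nnreal_eq_real _ A, hA.1.cfc_eq]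
  simp only [IsHermitian.cfc, Matrix.PosSemidef.sqrt, Unitary.conjStarAlgAut_apply]
  congr 3
  ext i
  simp [max_eq_left (hA.eigenvalues_nonneg i)]

lemma trace_mul_nonneg (hA : A.PosSemidef) (hB : B.PosSemidef) : 0 ≤ (A * B).trace := by
  have h := ((IsSelfAdjoint.of_nonneg (CFC.sqrt_nonneg A)).conjugate_nonneg hB.nonneg).posSemidef
  rw [← CFC.sqrt_mul_sqrt_self A hA.nonneg, mul_assoc, trace_mul_comm]
  exact h.trace_nonneg

end Matrix.PosSemidef

namespace Matrix

variable {n 𝕜 : Type*} [Fintype n] [RCLike 𝕜] {A B C : Matrix n n 𝕜}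

lemma trace_mul_le_trace_mul_of_le (hAB : A ≤ B) (hC : C.PosSemidef) :
    (A * C).trace ≤ (B * C).trace := by
  classical
  simpa [sub_mul, trace_sub, sub_nonneg] using (le_iff.1 hAB).trace_mul_nonneg hC

end Matrix

lemma fidelity_eq_of_eq_smul_conj {d : ℕ} {ρ Λ σ : Matrix (Fin d) (Fin d) ℂ}
    (hρ : ρ.PosSemidef) (hΛ : Λ.PosSemidef) (hσ : σ.PosSemidef) {t : ℝ} (ht : 0 ≤ t)
    (hσeq : σ = t • (hΛ.sqrt * ρ * hΛ.sqrt)) :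
    fidelity hρ hσ = √t * (hΛ.sqrt * ρ).trace.re := by
  have hsqrt : CFC.sqrt (CFC.sqrt ρ * σ * CFC.sqrt ρ) =
      √t • (CFC.sqrt ρ * CFC.sqrt Λ * CFC.sqrt ρ) := by
    rw [hσeq, hΛ.sqrt_eq_cfcSqrt, mul_smul_comm, smul_mul_assoc,
      CFC.sqrt_smul ht, CFC.sqrt_sqrt_mul_conjugate_mul_sqrt hρ.nonneg (CFC.sqrt_nonneg Λ)]
    exact (IsSelfAdjoint.of_nonneg (CFC.sqrt_nonneg ρ)).conjugate_nonneg
      ((IsSelfAdjoint.of_nonneg (CFC.sqrt_nonneg Λ)).conjugate_nonneg hρ.nonneg)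
  unfold fidelity
  rw [PosSemidef.sqrt_eq_cfcSqrt, hρ.sqrt_eq_cfcSqrt, hsqrt, trace_smul, trace_mul_cycle,
    CFC.sqrt_mul_sqrt_self ρ hρ.nonneg, trace_mul_comm, hΛ.sqrt_eq_cfcSqrt]
  exact Complex.smul_re ..

theorem stmt_3_general {d : ℕ} (ρ Λ : Matrix (Fin d) (Fin d) ℂ)
    (hρ : ρ.PosSemidef)
    (hΛ : Λ.PosSemidef) (hΛI : ((1 : Matrix (Fin d) (Fin d) ℂ) - Λ).PosSemidef)
    (σ : Matrix (Fin d) (Fin d) ℂ) (hσ : σ.PosSemidef)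
    (hσeq : σ = ((Λ * ρ).trace)⁻¹ • (hΛ.sqrt * ρ * hΛ.sqrt)) :
    Real.sqrt (((Λ * ρ).trace).re) ≤ fidelity hρ hσ := by
  set r := ((Λ * ρ).trace).re
  have htrace_nonneg : 0 ≤ (Λ * ρ).trace := hΛ.trace_mul_nonneg hρ
  obtain ⟨hr, htrace_im⟩ := Complex.nonneg_iff.1 htrace_nonneg
  have htrace : (Λ * ρ).trace = r := Complex.ext rfl (by simp [← htrace_im])
  have hΛsqrt : r ≤ (hΛ.sqrt * ρ).trace.re := by
    rw [hΛ.sqrt_eq_cfcSqrt]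
    exact Complex.re_le_re (trace_mul_le_trace_mul_of_le
      (CFC.le_sqrt_of_le_one hΛ.nonneg (le_iff.2 hΛI)) hρ)
  have hσeq' : σ = r⁻¹ • (hΛ.sqrt * ρ * hΛ.sqrt) := by
    rw [hσeq, htrace, ← Complex.ofReal_inv]
    rfl
  rw [fidelity_eq_of_eq_smul_conj hρ hΛ hσ (inv_nonneg.2 hr) hσeq']
  calc √r = √r⁻¹ * r := by rw [Real.sqrt_inv, inv_mul_eq_div, Real.div_sqrt]
    _ ≤ √r⁻¹ * (hΛ.sqrt * ρ).trace.re := by gcongr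

/-- For a density matrix `ρ` and measurement operator `0 ≤ Λ ≤ I` with
`tr(Λρ) > 0`, the fidelity with the post-measurement state satisfies
`F(ρ, √Λ ρ √Λ / tr(Λρ)) ≥ √(tr(Λρ))`. -/
theorem stmt_3 {d : ℕ} (ρ Λ : Matrix (Fin d) (Fin d) ℂ)
    (hρ : ρ.PosSemidef) (hρtr : ρ.trace = 1)
    (hΛ : Λ.PosSemidef) (hΛI : ((1 : Matrix (Fin d) (Fin d) ℂ) - Λ).PosSemidef)
    (hpos : 0 < ((Λ * ρ).trace).re)
    (σ : Matrix (Fin d) (Fin d) ℂ) (hσ : σ.PosSemidef)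
    (hσeq : σ = ((Λ * ρ).trace)⁻¹ • (hΛ.sqrt * ρ * hΛ.sqrt)) :
    Real.sqrt (((Λ * ρ).trace).re) ≤ fidelity hρ hσ :=
  stmt_3_general ρ Λ hρ hΛ hΛI σ hσ hσeq
end

section
/- Let Λ_1, …, Λ_n be orthogonal projections on ℂ^d, let Λ := (1/n) Σ_{j=1}^n Λ_j, let ρ and σ be density matrices on ℂ^d, and let 0 < ε < 1. Suppose there exists an index i with tr(Λ_i ρ) ≥ 1−ε, and that tr(Λ σ) ≤ (1−ε)/(2n). Then the trace distance satisfies ‖ρ − σ‖_tr ≥ (1−ε)/2. -/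
/-!
Split `A = ρ - σ` into its positive and negative parts, `A = A⁺ - A⁻` and `|A| = A⁺ + A⁻`.
Since `tr A = 0`, both parts have trace `‖ρ - σ‖_tr`, and for an orthogonal projection `P`
we get `tr(P A) ≤ tr(P A⁺) ≤ tr A⁺ = ‖ρ - σ‖_tr`. As each `tr(Λ_j σ)` is nonnegative,
`tr(Λ_i σ) ≤ n · tr(Λ σ) ≤ (1 - ε) / 2`, hence
`‖ρ - σ‖_tr ≥ tr(Λ_i ρ) - tr(Λ_i σ) ≥ (1 - ε) / 2`.
-/

open Matrix
open scoped ComplexOrder BigOperators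

/-- The trace distance `‖ρ − σ‖_tr = (1/2)·tr|ρ − σ|`, where `|M| = √(Mᴴ M)`. -/
noncomputable def traceDist {d : ℕ} (ρ σ : Matrix (Fin d) (Fin d) ℂ) : ℝ :=
  (1 / 2) * (((Matrix.posSemidef_conjTranspose_mul_self (ρ - σ)).1.eigenvectorUnitary.1 *
    diagonal (((↑) : ℝ → ℂ) ∘ (√·) ∘ (Matrix.posSemidef_conjTranspose_mul_self (ρ - σ)).1.eigenvalues) *
    (star (Matrix.posSemidef_conjTranspose_mul_self (ρ - σ)).1.eigenvectorUnitary : Matrix (Fin d) (Fin d) ℂ)).trace).re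

open scoped MatrixOrder

namespace Matrix

variable {ι 𝕜 : Type*} [Fintype ι] [RCLike 𝕜]

lemma PosSemidef.cfcSqrt_eq [DecidableEq ι] {B : Matrix ι ι 𝕜} (hB : B.PosSemidef) :
    CFC.sqrt B = (hB.1.eigenvectorUnitary : Matrix ι ι 𝕜) *
      diagonal (((↑) : ℝ → 𝕜) ∘ (√·) ∘ hB.1.eigenvalues) *
      star (hB.1.eigenvectorUnitary : Matrix ι ι 𝕜) := by
  rw [CFC.sqrt_eq_cfc, cfc_nnreal_eq_real _ B hB.nonneg, hB.1.cfc_eq, IsHermitian.cfc,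
    Unitary.conjStarAlgAut_apply]
  congr 2
  funext k l
  simp [diagonal_apply, Real.coe_sqrt, hB.eigenvalues_nonneg k]

lemma IsStarProjection.re_trace_mul_nonneg {P X : Matrix ι ι 𝕜} (hP : IsStarProjection P)
    (hX : X.PosSemidef) : 0 ≤ RCLike.re (P * X).trace := by
  have hPXP : (P * X * P).PosSemidef := by
    simpa [show Pᴴ = P from hP.isSelfAdjoint] using hX.mul_mul_conjTranspose_same P
  have htr : (P * X * P).trace = (P * X).trace := by
    rw [trace_mul_cycle, hP.isIdempotentElem.eq]
  exact (RCLike.nonneg_iff.mp (htr ▸ hPXP.trace_nonneg)).1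

lemma IsStarProjection.re_trace_mul_le [DecidableEq ι] {P X : Matrix ι ι 𝕜}
    (hP : IsStarProjection P) (hX : X.PosSemidef) : RCLike.re (P * X).trace ≤ RCLike.re X.trace := by
  have hcompl := hP.one_sub.re_trace_mul_nonneg hX
  rw [sub_mul, one_mul, trace_sub, map_sub] at hcompl
  linarith

lemma IsStarProjection.re_trace_mul_le_re_trace_abs_div_two [DecidableEq ι]
    {P A : Matrix ι ι 𝕜}
    (hP : IsStarProjection P) (hA : IsSelfAdjoint A) (htr : A.trace = 0) :
    RCLike.re (P * A).trace ≤ RCLike.re (CFC.abs A).trace / 2 := by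
  have hpos : (A⁺).PosSemidef := nonneg_iff_posSemidef.mp (CFC.posPart_nonneg A)
  have hneg : (A⁻).PosSemidef := nonneg_iff_posSemidef.mp (CFC.negPart_nonneg A)
  have hdiff : RCLike.re (A⁺).trace - RCLike.re (A⁻).trace = 0 := by
    rw [← map_sub, ← trace_sub, CFC.posPart_sub_negPart A, htr, map_zero]
  have hsum : RCLike.re (CFC.abs A).trace = RCLike.re (A⁺).trace + RCLike.re (A⁻).trace := by
    rw [← map_add, ← trace_add, CFC.posPart_add_negPart A]
  have hsplit :
      RCLike.re (P * A).trace = RCLike.re (P * A⁺).trace - RCLike.re (P * A⁻).trace := by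
    rw [← map_sub, ← trace_sub, ← mul_sub, CFC.posPart_sub_negPart A]
  have hPpos := hP.re_trace_mul_le hpos
  have hPneg := hP.re_trace_mul_nonneg hneg
  linarith

lemma re_trace_mul_le_re_trace_sum_mul {κ : Type*} [Fintype κ] {P : κ → Matrix ι ι 𝕜}
    (hP : ∀ j, IsStarProjection (P j)) {X : Matrix ι ι 𝕜} (hX : X.PosSemidef) (i : κ) :
    RCLike.re (P i * X).trace ≤ RCLike.re ((∑ j, P j) * X).trace := by
  rw [Finset.sum_mul, trace_sum, map_sum]
  exact Finset.single_le_sum (fun j _ ↦ (hP j).re_trace_mul_nonneg hX) (Finset.mem_univ i)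

end Matrix

lemma traceDist_eq_re_trace_abs_div_two {d : ℕ} (ρ σ : Matrix (Fin d) (Fin d) ℂ) :
    traceDist ρ σ = (CFC.abs (ρ - σ)).trace.re / 2 := by
  rw [traceDist, CFC.abs, star_eq_conjTranspose (ρ - σ),
    (posSemidef_conjTranspose_mul_self _).cfcSqrt_eq, one_div_mul_eq_div]
  rfl

theorem stmt_4_general {d n : ℕ} (Λ : Fin n → Matrix (Fin d) (Fin d) ℂ)
    (hΛH : ∀ j, (Λ j).IsHermitian) (hΛ2 : ∀ j, Λ j * Λ j = Λ j)
    (ρ σ : Matrix (Fin d) (Fin d) ℂ)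
    (hρ : ρ.PosSemidef) (hρtr : ρ.trace = 1)
    (hσ : σ.PosSemidef) (hσtr : σ.trace = 1)
    (ε : ℝ)
    (i : Fin n) (hi : 1 - ε ≤ ((Λ i * ρ).trace).re)
    (havg : (((((n : ℂ))⁻¹ • ∑ j, Λ j) * σ).trace).re ≤ (1 - ε) / (2 * n)) :
    (1 - ε) / 2 ≤ traceDist ρ σ := by
  have hΛ : ∀ j, IsStarProjection (Λ j) := fun j ↦ ⟨hΛ2 j, hΛH j⟩
  have hn : (0 : ℝ) < n := by exact_mod_cast i.pos
  have hσi : ((Λ i * σ).trace).re ≤ (1 - ε) / 2 := by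
    rw [smul_mul_assoc, trace_smul, smul_eq_mul, ← Complex.ofReal_natCast, ← Complex.ofReal_inv,
      Complex.re_ofReal_mul, inv_mul_eq_div, ← div_div, div_le_div_iff_of_pos_right hn] at havg
    exact (re_trace_mul_le_re_trace_sum_mul hΛ hσ i).trans havg
  have hρσ := (hΛ i).re_trace_mul_le_re_trace_abs_div_two (hρ.1.sub hσ.1)
    (by rw [trace_sub, hρtr, hσtr, sub_self])
  rw [mul_sub, trace_sub, map_sub] at hρσ
  rw [traceDist_eq_re_trace_abs_div_two]
  simp only [RCLike.re_to_complex] at hρσ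
  linarith

/-- If some projector `Λ_i` accepts `ρ` with probability at least `1−ε`
while the average `Λ = (1/n)·Σ_j Λ_j` accepts `σ` with probability at most `(1−ε)/(2n)`,
then `‖ρ − σ‖_tr ≥ (1−ε)/2`. -/
theorem stmt_4 {d n : ℕ} (Λ : Fin n → Matrix (Fin d) (Fin d) ℂ)
    (hΛH : ∀ j, (Λ j).IsHermitian) (hΛ2 : ∀ j, Λ j * Λ j = Λ j)
    (ρ σ : Matrix (Fin d) (Fin d) ℂ)
    (hρ : ρ.PosSemidef) (hρtr : ρ.trace = 1)
    (hσ : σ.PosSemidef) (hσtr : σ.trace = 1)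
    (ε : ℝ) (hε0 : 0 < ε) (hε1 : ε < 1)
    (i : Fin n) (hi : 1 - ε ≤ ((Λ i * ρ).trace).re)
    (havg : (((((n : ℂ))⁻¹ • ∑ j, Λ j) * σ).trace).re ≤ (1 - ε) / (2 * n)) :
    (1 - ε) / 2 ≤ traceDist ρ σ :=
  stmt_4_general Λ hΛH hΛ2 ρ σ hρ hρtr hσ hσtr ε i hi havg
end
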